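/- Let n ≥ 2, let A be a synchronizing core automaton over Fin n, let Φ be an automorphism of the underlying digraph of A, and let m ≥ 1 be such that the m-fold iterate Φ^m fixes every edge of A (Φ^m (q, x) = (q, x) for all (q, x) ∈ Q × Fin n). Then the induced map F_{A,Φ} is a homeomorphism of (Fin n)^ℕ commuting with the shift σ, and its m-fold composition is the identity. In particular, every map induced from a synchronizing core automaton equipped with an automorphism of its underlying digraph is a finite-order automorphism of the one-sided shift. -/
import Mathlib
set_option linter.unusedSectionVars false
set_option linter.unusedVariables false


/-- The one-sided shift map on `(Fin n)^ℕ`: `(σ x) i = x (i+1)`. -/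
def shiftMap (n : ℕ) : (ℕ → Fin n) → (ℕ → Fin n) := fun x i => x (i + 1)

/-- `b` has orbit length exactly `N` under `f`: `N` is the least `L ≥ 1` with `f^[L] b = b`. -/
def HasOrbitLen {β : Type*} (f : β → β) (b : β) (N : ℕ) : Prop :=
  IsLeast {L : ℕ | 0 < L ∧ f^[L] b = b} N

/-- An automorphism of the one-sided shift: a homeomorphism commuting with the shift. -/
def IsShiftAut (n : ℕ) (φ : (ℕ → Fin n) ≃ₜ (ℕ → Fin n)) : Prop :=
  ⇑φ ∘ shiftMap n = shiftMap n ∘ ⇑φ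

/-- `φ` has finite order. -/
def FiniteOrderAut (n : ℕ) (φ : (ℕ → Fin n) ≃ₜ (ℕ → Fin n)) : Prop :=
  ∃ m : ℕ, 0 < m ∧ (⇑φ)^[m] = id

/-- Extension of the transition function of an automaton to words (letters read in order). -/
def transStar {n : ℕ} {Q : Type*} (π : Fin n → Q → Q) : List (Fin n) → Q → Q
  | [], q => q
  | x :: w, q => transStar π w (π x q)

/-- The automaton `(Q, π)` is synchronizing at level `k` with synchronizing map `s`. -/
def SyncAtLevelWith {n : ℕ} {Q : Type*} (π : Fin n → Q → Q) (k : ℕ)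
    (s : List (Fin n) → Q) : Prop :=
  ∀ w : List (Fin n), w.length = k → ∀ q : Q, transStar π w q = s w

/-- The synchronizing map `s` at level `k` is surjective (the automaton is core). -/
def CoreAt {n : ℕ} {Q : Type*} (s : List (Fin n) → Q) (k : ℕ) : Prop :=
  ∀ q : Q, ∃ w : List (Fin n), w.length = k ∧ s w = q

/-- An automorphism of the underlying digraph of the automaton `(Q, π)`. -/
structure DigraphAut {Q : Type*} (n : ℕ) (π : Fin n → Q → Q) where
  α : Q ≃ Q
  lab : Q → Equiv.Perm (Fin n)
  compat : ∀ (x : Fin n) (q : Q), π (lab q x) (α q) = α (π x q)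

/-- Action of a digraph automorphism on the edge set `Q × Fin n`. -/
def edgeMap {Q : Type*} {n : ℕ} {π : Fin n → Q → Q} (Φ : DigraphAut n π) :
    Q × Fin n → Q × Fin n :=
  fun e => (Φ.α e.1, Φ.lab e.1 e.2)

/-- The output word map `Λ` of a digraph automorphism. -/
def outWord {Q : Type*} {n : ℕ} (π : Fin n → Q → Q) (lab : Q → Equiv.Perm (Fin n)) :
    List (Fin n) → Q → List (Fin n)
  | [], _ => []
  | x :: w, q => lab q x :: outWord π lab w (π x q)

/-- Action of a digraph automorphism on based circuits: `(q, w) ↦ (α q, Λ(w, q))`. -/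
def circMap {Q : Type*} {n : ℕ} {π : Fin n → Q → Q} (Φ : DigraphAut n π) :
    Q × List (Fin n) → Q × List (Fin n) :=
  fun c => (Φ.α c.1, outWord π Φ.lab c.2 c.1)

/-- `(q, w)` is a based circuit: `w` nonempty and `π*(w, q) = q`. -/
def IsBasedCircuit {Q : Type*} {n : ℕ} (π : Fin n → Q → Q) (c : Q × List (Fin n)) : Prop :=
  c.2 ≠ [] ∧ transStar π c.2 c.1 = c.1

/-- The sliding block code induced by an automaton synchronizing at level `k`
with synchronizing map `s` and digraph automorphism with labelling `lab`:
`(F x) i = lab q_i (x i)` where `q_i = s [x(i+k), x(i+k-1), …, x(i+1)]`. -/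
def inducedMap {Q : Type*} {n : ℕ} (k : ℕ) (s : List (Fin n) → Q)
    (lab : Q → Equiv.Perm (Fin n)) : (ℕ → Fin n) → (ℕ → Fin n) :=
  fun x i => lab (s (List.ofFn fun j : Fin k => x (i + k - (j : ℕ)))) (x i)

/-- `(A, Φ)` (with `A` synchronizing and core) is a support of the shift automorphism `φ`. -/
def IsSupport {Q : Type*} (n : ℕ) (π : Fin n → Q → Q) (Φ : DigraphAut n π)
    (φ : (ℕ → Fin n) ≃ₜ (ℕ → Fin n)) : Prop :=
  ∃ (k : ℕ) (s : List (Fin n) → Q), SyncAtLevelWith π k s ∧ CoreAt s k ∧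
    inducedMap k s Φ.lab = ⇑φ

/-- The permutation automorphism of the shift induced by a permutation of `Fin n`. -/
def permAutMap {n : ℕ} (ρ : Equiv.Perm (Fin n)) : (ℕ → Fin n) → (ℕ → Fin n) :=
  fun x i => ρ (x i)

/-- `t` is heavy for `(A, Φ, N)` with divisibility constant `b`. -/
def Heavy {Q : Type*} {n : ℕ} (π : Fin n → Q → Q) (Φ : DigraphAut n π)
    (N b : ℕ) (t : Q) : Prop :=
  b ∣ N ∧ b ≠ N ∧ (∀ r : ℕ, HasOrbitLen (⇑Φ.α) t r → r ∣ b) ∧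
  ∀ (q : Q) (x : Fin n), π x q = t →
    ∀ L : ℕ, HasOrbitLen (edgeMap Φ) (q, x) L → Nat.lcm L b = N

section Aux

variable {Q : Type*} {n : ℕ}

lemma transStar_append (π : Fin n → Q → Q) (u v : List (Fin n)) (q : Q) :
    transStar π (u ++ v) q = transStar π v (transStar π u q) := by
  induction u generalizing q with
  | nil => rfl
  | cons y u ih => exact ih (π y q)

lemma outWord_length (π : Fin n → Q → Q) (lab : Q → Equiv.Perm (Fin n))
    (w : List (Fin n)) (q : Q) : (outWord π lab w q).length = w.length := by
  induction w generalizing q with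
  | nil => rfl
  | cons y w ih => simp only [outWord, List.length_cons, ih]

lemma transStar_outWord (π : Fin n → Q → Q) (Φ : DigraphAut n π)
    (w : List (Fin n)) (q : Q) :
    transStar π (outWord π Φ.lab w q) (Φ.α q) = Φ.α (transStar π w q) := by
  induction w generalizing q with
  | nil => rfl
  | cons y w ih => simp only [outWord, transStar, Φ.compat, ih]

/-- Composition of digraph automorphisms. -/
def DigraphAut.compA {π : Fin n → Q → Q} (Φ Ψ : DigraphAut n π) : DigraphAut n π where
  α := Ψ.α.trans Φ.α
  lab := fun q => (Ψ.lab q).trans (Φ.lab (Ψ.α q))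
  compat := fun x q => by
    simp only [Equiv.trans_apply, Φ.compat, Ψ.compat]

/-- The identity digraph automorphism. -/
def DigraphAut.idA (π : Fin n → Q → Q) : DigraphAut n π where
  α := Equiv.refl Q
  lab := fun _ => Equiv.refl (Fin n)
  compat := fun _ _ => rfl

/-- Iterated composition of a digraph automorphism. -/
def DigraphAut.powA {π : Fin n → Q → Q} (Φ : DigraphAut n π) : ℕ → DigraphAut n π
  | 0 => .idA π
  | j + 1 => Φ.compA (Φ.powA j)

lemma edgeMap_compA {π : Fin n → Q → Q} (Φ Ψ : DigraphAut n π) :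
    edgeMap (Φ.compA Ψ) = edgeMap Φ ∘ edgeMap Ψ := rfl

lemma edgeMap_powA {π : Fin n → Q → Q} (Φ : DigraphAut n π) (j : ℕ) :
    edgeMap (Φ.powA j) = (edgeMap Φ)^[j] := by
  induction j with
  | zero => rfl
  | succ j ih =>
      rw [Function.iterate_succ']
      show edgeMap (Φ.compA (Φ.powA j)) = _
      rw [edgeMap_compA, ih]

end Aux

section Main

variable {Q : Type} [Nonempty Q] {n : ℕ} (π : Fin n → Q → Q) (k : ℕ)

/-- The window word of `x` at position `i`. -/
def Wd (k : ℕ) (x : ℕ → Fin n) (i : ℕ) : List (Fin n) :=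
  List.ofFn fun j : Fin k => x (i + k - (j : ℕ))

lemma Wd_length (x : ℕ → Fin n) (i : ℕ) : (Wd k x i).length = k := by
  simp [Wd]

lemma cons_Wd (x : ℕ → Fin n) (i : ℕ) :
    x (i + k + 1) :: Wd k x i = Wd k x (i + 1) ++ [x (i + 1)] := by
  have e1 : (List.ofFn fun j : Fin (k + 1) => x (i + k + 1 - (j : ℕ)))
      = x (i + k + 1) :: List.ofFn fun j : Fin k => x (i + k - (j : ℕ)) := by
    rw [List.ofFn_succ]
    simp only [Fin.val_zero, Nat.sub_zero, Fin.val_succ]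
    refine congrArg (x (i + k + 1) :: ·) (congrArg List.ofFn (funext fun j => ?_))
    congr 1
    omega
  have e2 : (List.ofFn fun j : Fin (k + 1) => x (i + k + 1 - (j : ℕ)))
      = (List.ofFn fun j : Fin k => x (i + 1 + k - (j : ℕ))) ++ [x (i + 1)] := by
    rw [List.ofFn_succ', List.concat_eq_append]
    simp only [Fin.coe_castSucc, Fin.val_last]
    refine congrArg₂ (· ++ ·) (congrArg List.ofFn (funext fun j => ?_)) ?_
    · congr 1
      have := j.isLt
      omega
    · congr 2
      omega
  unfold Wd
  rw [← e1, e2]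

variable {s : List (Fin n) → Q}

lemma state_step (hsync : SyncAtLevelWith π k s) (x : ℕ → Fin n) (i : ℕ) :
    s (Wd k x i) = π (x (i + 1)) (s (Wd k x (i + 1))) := by
  obtain ⟨q0⟩ := ‹Nonempty Q›
  calc s (Wd k x i) = transStar π (Wd k x i) (π (x (i + k + 1)) q0) :=
        (hsync _ (Wd_length k x i) _).symm
    _ = transStar π (x (i + k + 1) :: Wd k x i) q0 := rfl
    _ = transStar π (Wd k x (i + 1) ++ [x (i + 1)]) q0 := by rw [cons_Wd]
    _ = π (x (i + 1)) (transStar π (Wd k x (i + 1)) q0) := by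
        rw [transStar_append]; rfl
    _ = π (x (i + 1)) (s (Wd k x (i + 1))) := by
        rw [hsync _ (Wd_length k x (i + 1)) q0]

lemma outWord_Wd (hsync : SyncAtLevelWith π k s) (Φ : DigraphAut n π)
    (x : ℕ → Fin n) (i : ℕ) (d : ℕ) :
    outWord π Φ.lab (List.ofFn fun j : Fin d => x (i + d - (j : ℕ))) (s (Wd k x (i + d)))
      = List.ofFn fun j : Fin d =>
          Φ.lab (s (Wd k x (i + d - (j : ℕ)))) (x (i + d - (j : ℕ))) := by
  induction d with
  | zero => simp [outWord]
  | succ d ih =>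
      rw [List.ofFn_succ, List.ofFn_succ]
      simp only [Fin.val_zero, Nat.sub_zero, Fin.val_succ]
      show Φ.lab (s (Wd k x (i + (d + 1)))) (x (i + (d + 1))) ::
          outWord π Φ.lab _ (π (x (i + (d + 1))) (s (Wd k x (i + (d + 1))))) = _
      congr 1
      have hst : π (x (i + (d + 1))) (s (Wd k x (i + (d + 1)))) = s (Wd k x (i + d)) := by
        have := state_step π k hsync x (i + d)
        rw [show i + d + 1 = i + (d + 1) from rfl] at this
        exact this.symm
      rw [hst]
      have hfun : (fun j : Fin d => x (i + (d + 1) - ((j : ℕ) + 1)))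
          = fun j : Fin d => x (i + d - (j : ℕ)) := by
        funext j; congr 1; omega
      have hfun2 : (fun j : Fin d =>
            Φ.lab (s (Wd k x (i + (d + 1) - ((j : ℕ) + 1)))) (x (i + (d + 1) - ((j : ℕ) + 1))))
          = fun j : Fin d => Φ.lab (s (Wd k x (i + d - (j : ℕ)))) (x (i + d - (j : ℕ))) := by
        funext j
        have : i + (d + 1) - ((j : ℕ) + 1) = i + d - (j : ℕ) := by omega
        rw [this]
      rw [hfun, hfun2, ih]

lemma Wd_inducedMap (hsync : SyncAtLevelWith π k s) (Φ : DigraphAut n π)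
    (x : ℕ → Fin n) (i : ℕ) :
    Wd k (inducedMap k s Φ.lab x) i = outWord π Φ.lab (Wd k x i) (s (Wd k x (i + k))) := by
  have h := outWord_Wd π k hsync Φ x i k
  refine Eq.trans ?_ h.symm
  rfl

lemma state_map (hsync : SyncAtLevelWith π k s) (Φ : DigraphAut n π)
    (x : ℕ → Fin n) (i : ℕ) :
    s (Wd k (inducedMap k s Φ.lab x) i) = Φ.α (s (Wd k x i)) := by
  rw [Wd_inducedMap π k hsync Φ x i]
  have hlen : (outWord π Φ.lab (Wd k x i) (s (Wd k x (i + k)))).length = k := by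
    rw [outWord_length, Wd_length]
  rw [← hsync _ hlen (Φ.α (s (Wd k x (i + k)))), transStar_outWord,
    hsync _ (Wd_length k x i) (s (Wd k x (i + k)))]

lemma inducedMap_apply (lab : Q → Equiv.Perm (Fin n)) (x : ℕ → Fin n) (i : ℕ) :
    inducedMap k s lab x i = lab (s (Wd k x i)) (x i) := rfl

lemma induced_compA (hsync : SyncAtLevelWith π k s) (Φ Ψ : DigraphAut n π) :
    inducedMap k s Φ.lab ∘ inducedMap k s Ψ.lab = inducedMap k s (Φ.compA Ψ).lab := by
  funext x i
  show Φ.lab (s (Wd k (inducedMap k s Ψ.lab x) i)) (inducedMap k s Ψ.lab x i) = _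
  rw [state_map π k hsync Ψ x i]
  rfl

lemma induced_idA : inducedMap k s (DigraphAut.idA π).lab = id := rfl

lemma induced_powA (hsync : SyncAtLevelWith π k s) (Φ : DigraphAut n π) (j : ℕ) :
    (inducedMap k s Φ.lab)^[j] = inducedMap k s (Φ.powA j).lab := by
  induction j with
  | zero => rw [Function.iterate_zero, ← induced_idA π k]; rfl
  | succ j ih =>
      rw [Function.iterate_succ', ih, induced_compA π k hsync]
      rfl

lemma inducedMap_continuous (lab : Q → Equiv.Perm (Fin n)) :
    Continuous (inducedMap k s lab) := by
  refine continuous_pi fun i => ?_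
  have h : (fun x : ℕ → Fin n => inducedMap k s lab x i) =
      (fun p : (Fin k → Fin n) × Fin n => lab (s (List.ofFn p.1)) p.2) ∘
        (fun x : ℕ → Fin n => ((fun j : Fin k => x (i + k - (j : ℕ))), x i)) := rfl
  rw [h]
  exact continuous_of_discreteTopology.comp
    ((continuous_pi fun j => continuous_apply _).prodMk (continuous_apply i))

lemma induced_shift_comm (lab : Q → Equiv.Perm (Fin n)) :
    inducedMap k s lab ∘ shiftMap n = shiftMap n ∘ inducedMap k s lab := by
  funext x i
  show lab (s (List.ofFn fun j : Fin k => shiftMap n x (i + k - (j : ℕ)))) (shiftMap n x i)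
    = lab (s (List.ofFn fun j : Fin k => x (i + 1 + k - (j : ℕ)))) (x (i + 1))
  have hfun : (fun j : Fin k => shiftMap n x (i + k - (j : ℕ)))
      = fun j : Fin k => x (i + 1 + k - (j : ℕ)) := by
    funext j
    show x (i + k - (j : ℕ) + 1) = x (i + 1 + k - (j : ℕ))
    congr 1
    have := j.isLt
    omega
  rw [hfun]
  rfl

lemma main_lemma (hsync : SyncAtLevelWith π k s) (Φ : DigraphAut n π) (m : ℕ)
    (hm : 0 < m) (hfix : (edgeMap Φ)^[m] = id) :
    ∃ φ : (ℕ → Fin n) ≃ₜ (ℕ → Fin n), ⇑φ = inducedMap k s Φ.lab ∧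
      IsShiftAut n φ ∧ (inducedMap k s Φ.lab)^[m] = id := by
  set F := inducedMap k s Φ.lab with hF
  have hiter : F^[m] = id := by
    rw [hF, induced_powA π k hsync Φ m]
    have he : edgeMap (Φ.powA m) = id := by rw [edgeMap_powA]; exact hfix
    have hq : ∀ (q : Q) (y : Fin n), (Φ.powA m).lab q y = y := fun q y =>
      congrArg Prod.snd (congrFun he (q, y))
    funext x i
    exact hq _ _
  obtain ⟨m', rfl⟩ : ∃ m', m = m' + 1 := ⟨m - 1, (Nat.succ_pred_eq_of_pos hm).symm⟩
  have hcont : Continuous F := inducedMap_continuous k Φ.lab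
  refine ⟨⟨⟨F, F^[m'], fun x => ?_, fun x => ?_⟩, hcont, hcont.iterate m'⟩, rfl, ?_, hiter⟩
  · show F^[m'] (F x) = x
    rw [← Function.iterate_succ_apply, hiter]; rfl
  · show F (F^[m'] x) = x
    have h2 := Function.iterate_succ_apply' F m' x
    rw [hiter] at h2
    exact h2.symm
  · exact induced_shift_comm k Φ.lab

end Main

theorem induced_map_is_finite_order_shift_automorphism (n : ℕ) (hn : 2 ≤ n)
    (Q : Type) [Fintype Q] [Nonempty Q] (π : Fin n → Q → Q)
    (k : ℕ) (s : List (Fin n) → Q)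
    (hsync : SyncAtLevelWith π k s) (hcore : CoreAt s k)
    (Φ : DigraphAut n π) (m : ℕ) (hm : 1 ≤ m)
    (hfix : (edgeMap Φ)^[m] = id) :
    (∃ φ : (ℕ → Fin n) ≃ₜ (ℕ → Fin n), ⇑φ = inducedMap k s Φ.lab ∧
        IsShiftAut n φ ∧ (inducedMap k s Φ.lab)^[m] = id) ∧
    (∀ Ψ : DigraphAut n π, ∃ ψ : (ℕ → Fin n) ≃ₜ (ℕ → Fin n),
        ⇑ψ = inducedMap k s Ψ.lab ∧ IsShiftAut n ψ ∧ FiniteOrderAut n ψ) := by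
  have part1 := main_lemma π k hsync Φ m hm hfix
  refine ⟨part1, fun Ψ => ?_⟩
  let p : Equiv.Perm (Q × Fin n) := Equiv.prodShear Ψ.α Ψ.lab
  have hp : ⇑p = edgeMap Ψ := rfl
  have hM : (edgeMap Ψ)^[orderOf p] = id := by
    rw [← hp, ← Equiv.Perm.coe_pow, pow_orderOf_eq_one]
    rfl
  obtain ⟨ψ, hψ, hshift, hiter⟩ := main_lemma π k hsync Ψ (orderOf p) (orderOf_pos p) hM
  exact ⟨ψ, hψ, hshift, orderOf p, orderOf_pos p, by rw [hψ]; exact hiter⟩
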